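/- arXiv:1401.1117 — 2 statements merged into one kernel-verified Lean document; each statement's English description precedes it below -/
import Mathlib

section
/- Let m ≥ 2 and let L be a matrix over F_2 whose columns are indexed by the edge multiset E^{(n)} of n copies of each edge of K_m. Let ξ be uniform on F_2^{E^{(n)}}, X_i^n the bits on edges incident with i, L = Lξ the corresponding random vector, and define I(X_M^n | L) = H(X_M^n | L) − (1/(m−1)) Σ_{i=1}^m H(X_{M\setminus\{i\}}^n | X_i^n, L). Then I(X_M^n | L) = nm/2 − rank(L) + (1/(m−1)) Σ_{i=1}^m rank(L|_{E_i^c}), where E_i^c is the set of edges not incident with i. -/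
open Finset Real

noncomputable def probOf {Ω : Type*} [Fintype Ω] (p : Ω → ℝ) {α : Type*} [DecidableEq α]
    (X : Ω → α) (a : α) : ℝ :=
  ∑ ω ∈ Finset.univ.filter (fun ω => X ω = a), p ω

/-- Shannon entropy (in bits). -/
noncomputable def shannonH {Ω : Type*} [Fintype Ω] (p : Ω → ℝ) {α : Type*} [Fintype α]
    [DecidableEq α] (X : Ω → α) : ℝ :=
  - ∑ a : α, probOf p X a * Real.logb 2 (probOf p X a)

/-- Conditional Shannon entropy `H(X | Y) = H(X, Y) - H(Y)` (in bits). -/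
noncomputable def condH {Ω : Type*} [Fintype Ω] (p : Ω → ℝ) {α β : Type*} [Fintype α]
    [DecidableEq α] [Fintype β] [DecidableEq β] (X : Ω → α) (Y : Ω → β) : ℝ :=
  shannonH p (fun ω => (X ω, Y ω)) - shannonH p Y

/-- The edge multiset `E⁽ⁿ⁾` of the multigraph consisting of `n` copies of each
edge of the complete graph `K_m`. -/
def EdgeIdx (m n : ℕ) : Type := Fin n × {e : Sym2 (Fin m) // ¬ e.IsDiag}

instance (m n : ℕ) : Fintype (EdgeIdx m n) := instFintypeProd _ _
instance (m n : ℕ) : DecidableEq (EdgeIdx m n) := instDecidableEqProd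

/-- The sample space of the PIN model: an i.i.d. uniform `F₂`-valued bit `ξ_e` for
each edge `e` of the multigraph. -/
def PinOmega (m n : ℕ) : Type := EdgeIdx m n → ZMod 2

instance (m n : ℕ) : Fintype (PinOmega m n) := Pi.instFintype
instance (m n : ℕ) : DecidableEq (PinOmega m n) := Fintype.decidablePiFintype

/-- The uniform pmf on the PIN sample space. -/
noncomputable def pinUnif (m n : ℕ) : PinOmega m n → ℝ :=
  fun _ => (Fintype.card (PinOmega m n) : ℝ)⁻¹

/-- The observation `X_i^n` of terminal `i`: the bits on the edges incident with `i`. -/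
def pinX (m n : ℕ) (i : Fin m) (ω : PinOmega m n) :
    {e : EdgeIdx m n // i ∈ (e.2.1 : Sym2 (Fin m))} → ZMod 2 :=
  fun e => ω e.1

/-- The full observation `X_M^n = (X_1^n, …, X_m^n)`. -/
def pinXM (m n : ℕ) (ω : PinOmega m n) :
    (i : Fin m) → ({e : EdgeIdx m n // i ∈ (e.2.1 : Sym2 (Fin m))} → ZMod 2) :=
  fun i => pinX m n i ω

/-- The observations `X_{M∖{i}}^n` of all terminals other than `i`. -/
def pinXRest (m n : ℕ) (i : Fin m) (ω : PinOmega m n) :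
    (j : {j : Fin m // j ≠ i}) →
      ({e : EdgeIdx m n // (j : Fin m) ∈ (e.2.1 : Sym2 (Fin m))} → ZMod 2) :=
  fun j => pinX m n j.1 ω

/-!
Under the uniform law on `F₂^E`, every value of a linear map `A` has the same number of preimages,
so `Aξ` is uniform on the range and `H(Aξ) = rank A`; each conditional entropy is a difference of
two such ranks. Both `X_M` and `(X_{M∖{i}}, X_i)` determine `ξ`, so the joint terms have rank `|E|`.
The map `ξ ↦ (X_i, Lξ)` has rank `|E_i| + rank L|_{E_i^c}`: on the kernel of `ξ ↦ X_i` the map `L`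
only sees the columns outside `E_i`. What remains is counting: `|E| = n·m(m-1)/2`, and every edge
misses exactly `m - 2` vertices, so `∑ᵢ |E_i^c| = (m - 2)|E|`.
-/

section Entropy

variable {Ω V : Type*} [Fintype Ω] [DecidableEq V]

lemma probOf_uniform (X : Ω → V) (a : V) :
    probOf (fun _ => (Fintype.card Ω : ℝ)⁻¹) X a = #{ω | X ω = a} / Fintype.card Ω := by
  rw [probOf, sum_const, nsmul_eq_mul, div_eq_mul_inv]

variable [AddGroup Ω] [AddGroup V]

lemma probOf_uniform_addMonoidHom (f : Ω →+ V) (a : V) :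
    probOf (fun _ => (Fintype.card Ω : ℝ)⁻¹) f a
      = if a ∈ Set.range f then (Nat.card (Set.range f) : ℝ)⁻¹ else 0 := by
  have hfiber : ∀ b ∈ Set.range f, #{ω | f ω = b} = #{ω | f ω = 0} := fun b hb =>
    AddMonoidHom.card_fiber_eq_of_mem_range f hb ⟨0, map_zero f⟩
  have hcard : Fintype.card Ω = Nat.card (Set.range f) * #{ω | f ω = 0} := by
    rw [← card_univ, card_eq_sum_card_fiberwise (t := univ.image f)
        (fun ω _ => mem_image_of_mem f (mem_univ ω)),
      sum_congr rfl fun b hb => hfiber b (by simpa using hb), sum_const, smul_eq_mul,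
      ← Set.toFinset_range, Set.toFinset_card, Nat.card_eq_fintype_card]
  rw [probOf_uniform]
  split_ifs with ha
  · have hpos : 0 < #{ω | f ω = 0} := card_pos.2 ⟨0, by simp⟩
    have hr : Nat.card (Set.range f) ≠ 0 := (Nat.card_pos_iff.2 ⟨⟨⟨a, ha⟩⟩, inferInstance⟩).ne'
    rw [hfiber a ha, hcard]
    push_cast
    field_simp
  · rw [filter_false_of_mem fun ω _ hω => ha ⟨ω, hω⟩]
    simp

lemma shannonH_uniform_addMonoidHom [Fintype V] (f : Ω →+ V) :
    shannonH (fun _ => (Fintype.card Ω : ℝ)⁻¹) f = Real.logb 2 (Nat.card (Set.range f)) := by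
  simp only [shannonH, probOf_uniform_addMonoidHom, apply_ite (fun x : ℝ => x * Real.logb 2 x),
    zero_mul, sum_ite, sum_const_zero, add_zero, sum_const, nsmul_eq_mul]
  have hr : Nat.card (Set.range f) ≠ 0 :=
    (Nat.card_pos_iff.2 ⟨⟨⟨0, 0, map_zero f⟩⟩, inferInstance⟩).ne'
  rw [← Fintype.card_subtype, ← Nat.card_eq_fintype_card, Real.logb_inv]
  field_simp

end Entropy

section LinearEntropy

variable {K Ω A B : Type*} [Field K] [Fintype K] [AddCommGroup Ω] [Module K Ω] [Fintype Ω]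
  [AddCommGroup A] [Module K A] [Fintype A] [DecidableEq A]
  [AddCommGroup B] [Module K B] [Fintype B] [DecidableEq B]

lemma shannonH_uniform_linearMap (f : Ω →ₗ[K] A) :
    shannonH (fun _ => (Fintype.card Ω : ℝ)⁻¹) f
      = Module.finrank K f.range * Real.logb 2 (Fintype.card K) := by
  have hrange : Nat.card (Set.range f) = Fintype.card K ^ Module.finrank K f.range := by
    rw [← LinearMap.coe_range, Nat.card_coe_set_eq, ← Nat.card_eq_fintype_card,
      ← Module.natCard_eq_pow_finrank]
    rfl
  rw [← Real.logb_pow]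
  exact_mod_cast (shannonH_uniform_addMonoidHom f.toAddMonoidHom).trans (by rw [← hrange]; rfl)

lemma condH_uniform_linearMap (f : Ω →ₗ[K] A) (g : Ω →ₗ[K] B) :
    condH (fun _ => (Fintype.card Ω : ℝ)⁻¹) f g
      = (Module.finrank K (f.prod g).range - Module.finrank K g.range : ℝ)
        * Real.logb 2 (Fintype.card K) := by
  rw [condH, sub_mul, ← shannonH_uniform_linearMap, ← shannonH_uniform_linearMap]
  rfl

end LinearEntropy

section Rank

open Module

lemma LinearMap.finrank_range_prod {K V A B : Type*} [Field K] [AddCommGroup V] [Module K V]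
    [FiniteDimensional K V] [AddCommGroup A] [Module K A] [AddCommGroup B] [Module K B]
    (f : V →ₗ[K] A) (g : V →ₗ[K] B) :
    finrank K (f.prod g).range = finrank K f.range + finrank K (f.ker.map g) := by
  have hprod := (f.prod g).finrank_range_add_finrank_ker
  have hf := f.finrank_range_add_finrank_ker
  have hg := (g.domRestrict f.ker).finrank_range_add_finrank_ker
  have hker : finrank K (g.ker.comap f.ker.subtype) = finrank K (f.prod g).ker := by
    rw [← Submodule.finrank_map_subtype_eq, Submodule.map_comap_subtype, LinearMap.ker_prod]
  rw [LinearMap.range_domRestrict, LinearMap.ker_domRestrict, hker] at hg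
  omega

variable {K ι κ : Type*} [Field K] [Fintype κ] (L : Matrix ι κ K) (p : κ → Prop)
  [DecidablePred p]

lemma Matrix.mulVec_eq_submatrix_mulVec {x : κ → K} (hx : ∀ e, p e → x e = 0) :
    L.mulVec x = (L.submatrix id (Subtype.val : {e // ¬p e} → κ)).mulVec fun e => x e := by
  ext r
  simp only [Matrix.mulVec, dotProduct, Matrix.submatrix_apply, id_eq]
  rw [← Fintype.sum_subtype_add_sum_subtype p,
    Fintype.sum_eq_zero _ fun e => by rw [hx e e.2, mul_zero], zero_add]

lemma map_mulVecLin_ker_funLeft :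
    (LinearMap.funLeft K K (Subtype.val : Subtype p → κ)).ker.map L.mulVecLin
      = (L.submatrix id (Subtype.val : {e // ¬p e} → κ)).mulVecLin.range := by
  apply le_antisymm
  · rintro _ ⟨x, hx, rfl⟩
    exact ⟨fun e => x e, (L.mulVec_eq_submatrix_mulVec p fun e he => congrFun hx ⟨e, he⟩).symm⟩
  · rintro _ ⟨y, rfl⟩
    refine ⟨fun e => if h : p e then 0 else y ⟨e, h⟩, funext fun e => dif_pos e.2, ?_⟩
    rw [Matrix.mulVecLin_apply, L.mulVec_eq_submatrix_mulVec p fun e he => dif_pos he]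
    congr 1
    exact funext fun e => dif_neg e.2

lemma finrank_range_funLeft_prod_mulVecLin :
    finrank K ((LinearMap.funLeft K K (Subtype.val : Subtype p → κ)).prod L.mulVecLin).range
      = Fintype.card (Subtype p) + (L.submatrix id (Subtype.val : {e // ¬p e} → κ)).rank := by
  rw [LinearMap.finrank_range_prod, map_mulVecLin_ker_funLeft,
    LinearMap.range_eq_top.2 (LinearMap.funLeft_surjective_of_injective K K _
      Subtype.val_injective),
    finrank_top, finrank_fintype_fun_eq_card, Matrix.rank]

end Rank

section Pin

variable {m n q : ℕ}

lemma pinXM_injective : Function.Injective (pinXM m n) := fun _ _ h => funext fun e =>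
  congrFun (congrFun h e.2.1.out.1) ⟨e, Sym2.out_fst_mem _⟩

lemma pinXRest_pinX_injective (i : Fin m) :
    Function.Injective fun ω => (pinXRest m n i ω, pinX m n i ω) := by
  intro ω ω' h
  obtain ⟨hrest, hi⟩ := Prod.ext_iff.1 h
  funext e
  by_cases he : i ∈ (e.2.1 : Sym2 (Fin m))
  · exact congrFun hi ⟨e, he⟩
  · have hj := Sym2.out_fst_mem (e.2.1 : Sym2 (Fin m))
    exact congrFun (congrFun hrest ⟨_, fun hji => he (hji ▸ hj)⟩) ⟨e, hj⟩

lemma card_edgeIdx : (Fintype.card (EdgeIdx m n) : ℝ) = n * (m * (m - 1) / 2) := by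
  change (Fintype.card (Fin n × {e : Sym2 (Fin m) // ¬e.IsDiag}) : ℝ) = _
  rw [Fintype.card_prod, Fintype.card_fin, Sym2.card_subtype_not_diag, Fintype.card_fin]
  push_cast [Nat.cast_choose_two]
  ring

lemma Sym2.card_filter_not_mem {α : Type*} [Fintype α] [DecidableEq α] {z : Sym2 α}
    (hz : ¬z.IsDiag) : #{a | a ∉ z} = Fintype.card α - 2 := by
  have : ({a | a ∉ z} : Finset α) = z.toFinsetᶜ := by ext; simp
  rw [this, card_compl, Sym2.card_toFinset_of_not_isDiag z hz]

lemma sum_card_edgeIdx_not_mem :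
    ∑ i : Fin m, Fintype.card {e : EdgeIdx m n // i ∉ (e.2.1 : Sym2 (Fin m))}
      = (m - 2) * Fintype.card (EdgeIdx m n) := by
  simp only [Fintype.card_subtype, card_filter]
  rw [sum_comm, ← card_univ, card_eq_sum_ones, mul_sum, mul_one]
  refine sum_congr rfl fun e _ => ?_
  rw [← card_filter, Sym2.card_filter_not_mem e.2.2, Fintype.card_fin]

lemma condH_pinXM_mulVec (L : Matrix (Fin q) (EdgeIdx m n) (ZMod 2)) :
    condH (pinUnif m n) (pinXM m n) (fun ω => L.mulVec ω)
      = Fintype.card (EdgeIdx m n) - L.rank := by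
  set X := LinearMap.pi fun i => LinearMap.funLeft (ZMod 2) (ZMod 2)
    (Subtype.val : {e : EdgeIdx m n // i ∈ (e.2.1 : Sym2 (Fin m))} → EdgeIdx m n)
  have hinj : Function.Injective (X.prod L.mulVecLin) := fun _ _ h =>
    pinXM_injective (congrArg Prod.fst h)
  have h := condH_uniform_linearMap X L.mulVecLin
  rw [LinearMap.finrank_range_of_inj hinj, Module.finrank_fintype_fun_eq_card, ZMod.card,
    Nat.cast_ofNat, Real.logb_self_eq_one one_lt_two, mul_one] at h
  -- `PinOmega m n` unfolds to `EdgeIdx m n → ZMod 2`, and then `pinXM m n` is `X`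
  exact h

lemma condH_pinXRest_pinX_mulVec (L : Matrix (Fin q) (EdgeIdx m n) (ZMod 2)) (i : Fin m) :
    condH (pinUnif m n) (pinXRest m n i) (fun ω => (pinX m n i ω, L.mulVec ω))
      = Fintype.card {e : EdgeIdx m n // i ∉ (e.2.1 : Sym2 (Fin m))}
        - (L.submatrix id
            (fun e : {e : EdgeIdx m n // i ∉ (e.2.1 : Sym2 (Fin m))} => e.1)).rank := by
  set Xrest := LinearMap.pi fun j : {j : Fin m // j ≠ i} => LinearMap.funLeft (ZMod 2) (ZMod 2)
    (Subtype.val : {e : EdgeIdx m n // (j : Fin m) ∈ (e.2.1 : Sym2 (Fin m))} → EdgeIdx m n)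
  set XiL := (LinearMap.funLeft (ZMod 2) (ZMod 2)
    (Subtype.val : {e : EdgeIdx m n // i ∈ (e.2.1 : Sym2 (Fin m))} → EdgeIdx m n)).prod
      L.mulVecLin
  have hinj : Function.Injective (Xrest.prod XiL) := fun _ _ h =>
    pinXRest_pinX_injective i (congrArg (fun z => (z.1, z.2.1)) h)
  have h := condH_uniform_linearMap Xrest XiL
  rw [LinearMap.finrank_range_of_inj hinj, Module.finrank_fintype_fun_eq_card,
    finrank_range_funLeft_prod_mulVecLin, ZMod.card, Nat.cast_ofNat,
    Real.logb_self_eq_one one_lt_two, mul_one] at h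
  rw [Fintype.card_subtype_compl, Nat.cast_sub (Fintype.card_subtype_le _), sub_sub]
  push_cast at h
  exact h

end Pin

theorem stmt_12 (m n q : ℕ) (hm : 2 ≤ m)
    (L : Matrix (Fin q) (EdgeIdx m n) (ZMod 2)) :
    condH (pinUnif m n) (pinXM m n) (fun ω => L.mulVec ω) -
      (1 / (m - 1)) * ∑ i : Fin m,
        condH (pinUnif m n) (pinXRest m n i)
          (fun ω => (pinX m n i ω, L.mulVec ω))
    = n * m / 2 - (L.rank : ℝ) +
        (1 / (m - 1)) * ∑ i : Fin m,
          ((L.submatrix id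
            (fun e : {e : EdgeIdx m n // i ∉ (e.2.1 : Sym2 (Fin m))} => e.1)).rank : ℝ) := by
  have hm1 : (m : ℝ) - 1 ≠ 0 := sub_ne_zero.2 (by norm_cast; omega)
  have hsum : ∑ i : Fin m, (Fintype.card {e : EdgeIdx m n // i ∉ (e.2.1 : Sym2 (Fin m))} : ℝ)
      = (m - 2) * Fintype.card (EdgeIdx m n) := by
    rw [← Nat.cast_ofNat, ← Nat.cast_sub hm]
    exact_mod_cast sum_card_edgeIdx_not_mem
  simp only [condH_pinXM_mulVec, condH_pinXRest_pinX_mulVec, sum_sub_distrib, hsum, card_edgeIdx]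
  field_simp
  ring
end

section
/- Let X_M = (X_1,...,X_m) be finite-valued random variables and λ a fractional partition with optimal value I(X_M) = H(X_M) − Σ_B λ_B H(X_B | X_{B^c}) ≥ 0, and assume the conditional version I(X_M | L) = H(X_M | L) − Σ_B λ_B H(X_B | X_{B^c}, L) ≥ 0 for a function L of X_M. Then H(L) ≥ Σ_B λ_B H(L | X_{B^c}) + I(X_M) − I(X_M | L); in particular, if additionally I(X_M | L) ≤ ε then H(L) ≥ I(X_M) − ε. -/
/-! Since `L` is a function of `X_M`, `H(X_M | L) = H(X_M) - H(L)`, and since it is also a function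
of `(X_B, X_Bᶜ)` for every `B`, `H(X_B | X_Bᶜ) - H(X_B | X_Bᶜ, L) = H(L | X_Bᶜ)`. Weighting by `λ_B`
and summing turns this into the identity `H(L) = ∑ λ_B H(L | X_Bᶜ) + I(X_M) - I(X_M | L)`; the
bounds follow because `λ_B ≥ 0` and conditional entropies are nonnegative. -/

open Finset Real

/-- The collection of nonempty proper subsets of `{1, …, m}`. -/
def properSubsets (m : ℕ) : Finset (Finset (Fin m)) :=
  Finset.univ.filter (fun B => B.Nonempty ∧ B ≠ Finset.univ)

section Entropy

variable {Ω : Type*} [Fintype Ω] (p : Ω → ℝ) {α β γ : Type*}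
  [DecidableEq α] [DecidableEq β] [DecidableEq γ]

lemma probOf_nonneg (hp0 : ∀ ω, 0 ≤ p ω) (X : Ω → α) (a : α) : 0 ≤ probOf p X a :=
  Finset.sum_nonneg fun ω _ => hp0 ω

lemma probOf_prod_le (hp0 : ∀ ω, 0 ≤ p ω) (X : Ω → α) (Y : Ω → β) (a : α) (b : β) :
    probOf p (fun ω => (X ω, Y ω)) (a, b) ≤ probOf p Y b :=
  Finset.sum_le_sum_of_subset_of_nonneg
    (fun ω hω => by simp_all [Prod.ext_iff]) (fun ω _ _ => hp0 ω)

lemma sum_probOf_prod [Fintype α] (X : Ω → α) (Y : Ω → β) (b : β) :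
    ∑ a, probOf p (fun ω => (X ω, Y ω)) (a, b) = probOf p Y b := by
  rw [probOf, ← Finset.sum_fiberwise _ X]
  refine Finset.sum_congr rfl fun a _ => ?_
  rw [probOf, Finset.filter_filter]
  simp only [Prod.ext_iff, and_comm]

variable [Fintype α] [Fintype β] [Fintype γ]

lemma shannonH_comp_of_injective (Z : Ω → α) {h : α → γ} (hh : Function.Injective h) :
    shannonH p (fun ω => h (Z ω)) = shannonH p Z := by
  have hprob : ∀ a, probOf p (fun ω => h (Z ω)) (h a) = probOf p Z a := fun a => by
    simp only [probOf, hh.eq_iff]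
  have hzero : ∀ c ∈ Finset.univ, c ∉ Finset.univ.image h →
      probOf p (fun ω => h (Z ω)) c * Real.logb 2 (probOf p (fun ω => h (Z ω)) c) = 0 := by
    intro c _ hc
    have : Finset.univ.filter (fun ω => h (Z ω) = c) = ∅ :=
      Finset.filter_eq_empty_iff.mpr fun ω _ hω => hc (hω ▸ Finset.mem_image_of_mem h (mem_univ _))
    simp [probOf, this]
  unfold shannonH
  rw [← Finset.sum_subset (Finset.subset_univ _) hzero, Finset.sum_image hh.injOn]
  simp_rw [hprob]

lemma shannonH_prod_swap (X : Ω → α) (Y : Ω → β) :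
    shannonH p (fun ω => (Y ω, X ω)) = shannonH p (fun ω => (X ω, Y ω)) :=
  shannonH_comp_of_injective p (fun ω => (X ω, Y ω)) (h := Prod.swap) Prod.swap_injective

lemma shannonH_prod_of_eq_comp (X : Ω → α) {Y : Ω → β} {g : α → β} (hY : ∀ ω, Y ω = g (X ω)) :
    shannonH p (fun ω => (X ω, Y ω)) = shannonH p X := by
  simp only [hY]
  refine shannonH_comp_of_injective p X (h := fun x => (x, g x)) fun x x' h => ?_
  simp only [Prod.mk.injEq] at h
  exact h.1

lemma condH_eq_sub_of_eq_comp (X : Ω → α) {Y : Ω → β} {g : α → β} (hY : ∀ ω, Y ω = g (X ω)) :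
    condH p X Y = shannonH p X - shannonH p Y := by
  rw [condH, shannonH_prod_of_eq_comp p X hY]

lemma condH_sub_condH_prod_of_eq_comp (X : Ω → α) (Y : Ω → β) {L : Ω → γ} {g : α × β → γ}
    (hL : ∀ ω, L ω = g (X ω, Y ω)) :
    condH p X Y - condH p X (fun ω => (Y ω, L ω)) = condH p L Y := by
  have hXYL : shannonH p (fun ω => (X ω, (Y ω, L ω))) = shannonH p (fun ω => (X ω, Y ω)) := by
    simp only [hL]
    refine shannonH_comp_of_injective p (fun ω => (X ω, Y ω)) (h := fun z => (z.1, (z.2, g z)))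
      fun z z' h => ?_
    simp only [Prod.mk.injEq] at h
    exact Prod.ext h.1 h.2.1
  simp only [condH, hXYL, shannonH_prod_swap p L Y]
  ring

lemma condH_nonneg (hp0 : ∀ ω, 0 ≤ p ω) (X : Ω → α) (Y : Ω → β) : 0 ≤ condH p X Y := by
  set q := probOf p (fun ω => (X ω, Y ω))
  have hterm : ∀ a b,
      q (a, b) * Real.logb 2 (q (a, b)) ≤ q (a, b) * Real.logb 2 (probOf p Y b) := by
    intro a b
    rcases (probOf_nonneg p hp0 (fun ω => (X ω, Y ω)) (a, b)).eq_or_lt with h | h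
    · simp [q, ← h]
    · exact mul_le_mul_of_nonneg_left
        (Real.logb_le_logb_of_le one_lt_two h (probOf_prod_le p hp0 X Y a b)) h.le
  have hmarg : ∑ b, probOf p Y b * Real.logb 2 (probOf p Y b) =
      ∑ a, ∑ b, q (a, b) * Real.logb 2 (probOf p Y b) := by
    rw [Finset.sum_comm]
    exact Finset.sum_congr rfl fun b _ => by rw [← Finset.sum_mul, sum_probOf_prod]
  unfold condH shannonH
  rw [Fintype.sum_prod_type, hmarg]
  linarith [Finset.sum_le_sum fun a (_ : a ∈ Finset.univ) =>
    Finset.sum_le_sum fun b (_ : b ∈ Finset.univ) => hterm a b]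

end Entropy

def glueCompl {ι : Type*} [Fintype ι] [DecidableEq ι] {α : ι → Type*} (B : Finset ι)
    (z : ((i : {x // x ∈ B}) → α i.1) × ((i : {x // x ∈ Bᶜ}) → α i.1)) (i : ι) : α i :=
  if h : i ∈ B then z.1 ⟨i, h⟩ else z.2 ⟨i, Finset.mem_compl.mpr h⟩

lemma glueCompl_restrict {ι : Type*} [Fintype ι] [DecidableEq ι] {α : ι → Type*}
    (B : Finset ι) (x : (i : ι) → α i) :
    glueCompl B (fun i : {x // x ∈ B} => x i.1, fun i : {x // x ∈ Bᶜ} => x i.1) = x := by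
  funext i
  unfold glueCompl
  split <;> rfl

/-- Lemma 1 of the paper: `H(X_M) - ∑ λ_B H(X_B | X_Bᶜ) = I(X_M | L) + H(L) - ∑ λ_B H(L | X_Bᶜ)`. -/
lemma shannonH_eq_sum_condH_add_sub {Ω : Type*} [Fintype Ω] (p : Ω → ℝ)
    {ι : Type*} [Fintype ι] [DecidableEq ι] {α : ι → Type*} [∀ i, Fintype (α i)]
    [∀ i, DecidableEq (α i)] (X : (i : ι) → Ω → α i)
    {β : Type*} [Fintype β] [DecidableEq β] {L : Ω → β} {f : ((i : ι) → α i) → β}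
    (hL : ∀ ω, L ω = f (fun i => X i ω)) (𝓑 : Finset (Finset ι)) (lam : Finset ι → ℝ) :
    shannonH p L =
      (∑ B ∈ 𝓑, lam B * condH p L (fun ω => (fun i : {x // x ∈ Bᶜ} => X i.1 ω))) +
      (shannonH p (fun ω => (fun i => X i ω)) -
        ∑ B ∈ 𝓑, lam B *
          condH p (fun ω => (fun i : {x // x ∈ B} => X i.1 ω))
            (fun ω => (fun i : {x // x ∈ Bᶜ} => X i.1 ω))) -
      (condH p (fun ω => (fun i => X i ω)) L -
        ∑ B ∈ 𝓑, lam B *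
          condH p (fun ω => (fun i : {x // x ∈ B} => X i.1 ω))
            (fun ω => ((fun i : {x // x ∈ Bᶜ} => X i.1 ω), L ω))) := by
  have hblock : ∀ B : Finset ι,
      condH p (fun ω => (fun i : {x // x ∈ B} => X i.1 ω))
          (fun ω => (fun i : {x // x ∈ Bᶜ} => X i.1 ω)) -
        condH p (fun ω => (fun i : {x // x ∈ B} => X i.1 ω))
          (fun ω => ((fun i : {x // x ∈ Bᶜ} => X i.1 ω), L ω)) =
      condH p L (fun ω => (fun i : {x // x ∈ Bᶜ} => X i.1 ω)) := fun B =>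
    condH_sub_condH_prod_of_eq_comp p _ _ (g := fun z => f (glueCompl B z)) fun ω => by
      rw [hL]
      exact congrArg f (glueCompl_restrict B (fun i => X i ω)).symm
  rw [condH_eq_sub_of_eq_comp p _ hL]
  have hsum := Finset.sum_congr rfl fun B (_ : B ∈ 𝓑) => congrArg (lam B * ·) (hblock B)
  simp only [mul_sub, Finset.sum_sub_distrib] at hsum
  linarith

theorem stmt_17_general {Ω : Type*} [Fintype Ω] (p : Ω → ℝ)
    (hp0 : ∀ ω, 0 ≤ p ω)
    (m : ℕ) (α : Fin m → Type*) [∀ i, Fintype (α i)] [∀ i, DecidableEq (α i)]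
    (X : (i : Fin m) → Ω → α i)
    {β : Type*} [Fintype β] [DecidableEq β] (L : Ω → β)
    (hL : ∃ f : ((i : Fin m) → α i) → β, ∀ ω, L ω = f (fun i => X i ω))
    (lam : Finset (Fin m) → ℝ)
    (hlam0 : ∀ B ∈ properSubsets m, 0 ≤ lam B)
    (IXM IXML : ℝ)
    (hIXM : IXM = shannonH p (fun ω => (fun i => X i ω)) -
      ∑ B ∈ properSubsets m, lam B *
        condH p (fun ω => (fun i : {x // x ∈ B} => X i.1 ω))
          (fun ω => (fun i : {x // x ∈ Bᶜ} => X i.1 ω)))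
    (hIXML : IXML = condH p (fun ω => (fun i => X i ω)) L -
      ∑ B ∈ properSubsets m, lam B *
        condH p (fun ω => (fun i : {x // x ∈ B} => X i.1 ω))
          (fun ω => ((fun i : {x // x ∈ Bᶜ} => X i.1 ω), L ω))) :
    (shannonH p L ≥
      (∑ B ∈ properSubsets m, lam B *
        condH p L (fun ω => (fun i : {x // x ∈ Bᶜ} => X i.1 ω))) + IXM - IXML) ∧
    (∀ ε : ℝ, IXML ≤ ε → shannonH p L ≥ IXM - ε) := by
  obtain ⟨f, hf⟩ := hL
  have hdecomp := shannonH_eq_sum_condH_add_sub p X hf (properSubsets m) lam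
  rw [← hIXM, ← hIXML] at hdecomp
  have hsum_nonneg : 0 ≤ ∑ B ∈ properSubsets m, lam B *
      condH p L (fun ω => (fun i : {x // x ∈ Bᶜ} => X i.1 ω)) :=
    Finset.sum_nonneg fun B hB => mul_nonneg (hlam0 B hB) (condH_nonneg p hp0 _ _)
  exact ⟨hdecomp.ge, fun ε hε => by linarith⟩

theorem stmt_17 {Ω : Type*} [Fintype Ω] (p : Ω → ℝ)
    (hp0 : ∀ ω, 0 ≤ p ω) (hp1 : ∑ ω, p ω = 1)
    (m : ℕ) (α : Fin m → Type*) [∀ i, Fintype (α i)] [∀ i, DecidableEq (α i)]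
    (X : (i : Fin m) → Ω → α i)
    {β : Type*} [Fintype β] [DecidableEq β] (L : Ω → β)
    (hL : ∃ f : ((i : Fin m) → α i) → β, ∀ ω, L ω = f (fun i => X i ω))
    (lam : Finset (Fin m) → ℝ)
    (hlam0 : ∀ B ∈ properSubsets m, 0 ≤ lam B)
    (hlam1 : ∀ i : Fin m, ∑ B ∈ (properSubsets m).filter (fun B => i ∈ B), lam B = 1)
    (IXM IXML : ℝ)
    (hIXM : IXM = shannonH p (fun ω => (fun i => X i ω)) -
      ∑ B ∈ properSubsets m, lam B *
        condH p (fun ω => (fun i : {x // x ∈ B} => X i.1 ω))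
          (fun ω => (fun i : {x // x ∈ Bᶜ} => X i.1 ω)))
    (hIXML : IXML = condH p (fun ω => (fun i => X i ω)) L -
      ∑ B ∈ properSubsets m, lam B *
        condH p (fun ω => (fun i : {x // x ∈ B} => X i.1 ω))
          (fun ω => ((fun i : {x // x ∈ Bᶜ} => X i.1 ω), L ω)))
    (hIXMnn : 0 ≤ IXM) (hIXMLnn : 0 ≤ IXML) :
    (shannonH p L ≥
      (∑ B ∈ properSubsets m, lam B *
        condH p L (fun ω => (fun i : {x // x ∈ Bᶜ} => X i.1 ω))) + IXM - IXML) ∧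
    (∀ ε : ℝ, IXML ≤ ε → shannonH p L ≥ IXM - ε) :=
  stmt_17_general p hp0 m α X L hL lam hlam0 IXM IXML hIXM hIXML
end
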